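/- arXiv:2211.05807 — 2 statements merged into one kernel-verified Lean document; each statement's English description precedes it below -/
import Mathlib

section
/- Let μ = (μ₁,…,μ_{2n}) and μ' = (μ'₁,…,μ'_{2n}) be weakly decreasing rational tuples both satisfying the symplectic symmetry μ_i + μ_{2n+1−i} constant and μ'_i + μ'_{2n+1−i} constant. Then μ ≤ μ' in the dominance order for GL_{2n} (all partial sums of μ bounded by those of μ', total sums equal) if and only if μ ≤ μ' in the dominance order for GSp_{2n} (μ' − μ is a nonnegative rational combination of the positive coroots of GSp_{2n}). -/
/-!
Let `S_m(ν)` be the sum of the first `m` entries of `ν`. The vectors with `S_m(ν) ≥ 0` for all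
`m` and `S_{2n}(ν) = 0` form a convex cone containing every positive coroot `e_p - e_q` of
`GL_{2n}`, and each positive coroot of `GSp_{2n}` is a sum of one or two of these; this gives
one direction.

Conversely, equal totals force the two similitude constants to agree, so `ν = μ' - μ` satisfies
`ν_i + ν_{2n-1-i} = 0`, whence `S_{2n-m}(ν) = S_m(ν)`. Then `ν` is the combination of the simple
coroots `e_i - e_{i+1} - e_{2n-2-i} + e_{2n-1-i}` (`i < n - 1`) and `e_{n-1} - e_n` with the
coefficients `S_{i+1}(ν)` and `S_n(ν)`: both sides have the same partial sums, and a vector is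
determined by its partial sums.
-/

/-- Partial sum of the first `k` entries. -/
def partialSum2n (n : ℕ) (μ : Fin (2 * n) → ℚ) (k : ℕ) : ℚ :=
  ∑ i ∈ Finset.univ.filter (fun i : Fin (2 * n) => i.val < k), μ i

/-- Indicator vector `e_i` in `ℚ^{2n}` evaluated at `k`, for an index given by a
natural number. -/
def ind (n : ℕ) (i : ℕ) (k : Fin (2 * n)) : ℚ := if k.val = i then 1 else 0

/-- The positive coroot of `GSp_{2n}` attached to the root `x_i − x_j` (`i < j ≤ n`),
embedded in the cocharacter space of `GL_{2n}`: `e_i − e_j − e_{2n+1−i} + e_{2n+1−j}`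
(0-indexed mirror `2n−1−i`). -/
def corootA (n : ℕ) (i j : ℕ) (k : Fin (2 * n)) : ℚ :=
  ind n i k - ind n j k - ind n (2 * n - 1 - i) k + ind n (2 * n - 1 - j) k

/-- The positive coroot attached to the root `x_i + x_j − sim` (`i < j ≤ n`):
`e_i + e_j − e_{2n+1−i} − e_{2n+1−j}`. -/
def corootB (n : ℕ) (i j : ℕ) (k : Fin (2 * n)) : ℚ :=
  ind n i k + ind n j k - ind n (2 * n - 1 - i) k - ind n (2 * n - 1 - j) k

/-- The positive coroot attached to the long root `2x_i − sim` (`i ≤ n`):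
`e_i − e_{2n+1−i}`. -/
def corootC (n : ℕ) (i : ℕ) (k : Fin (2 * n)) : ℚ :=
  ind n i k - ind n (2 * n - 1 - i) k

lemma Fin.sum_add_rev {N : ℕ} (ν : Fin N → ℚ) : ∑ i, (ν i + ν i.rev) = 2 * ∑ i, ν i := by
  rw [Finset.sum_add_distrib, Fintype.sum_equiv Fin.revPerm (fun i => ν i.rev) ν (fun _ => rfl)]
  ring

lemma Fin.add_rev_eq_zero_of_sum_eq_zero {N : ℕ} {ν : Fin N → ℚ} {e : ℚ}
    (h : ∀ i, ν i + ν i.rev = e) (hsum : ∑ i, ν i = 0) (i : Fin N) : ν i + ν i.rev = 0 := by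
  have hN : (N : ℚ) ≠ 0 := Nat.cast_ne_zero.mpr (Fin.pos i).ne'
  have := Fin.sum_add_rev ν
  simp only [h, hsum, Finset.sum_const, Finset.card_univ, Fintype.card_fin, nsmul_eq_mul,
    mul_zero, mul_eq_zero, hN, false_or] at this
  rw [h, this]

lemma Fin.sum_ite_val_eq {N : ℕ} (t : ℕ) (f : Fin N → ℚ) :
    ∑ j : Fin N, (if (j : ℕ) = t then f j else 0) = if h : t < N then f ⟨t, h⟩ else 0 := by
  split_ifs with h
  · have : ∀ j : Fin N, (j : ℕ) = t ↔ j = ⟨t, h⟩ := fun j => by simp [Fin.ext_iff]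
    simp only [this, Finset.sum_ite_eq', Finset.mem_univ, if_true]
  · exact Finset.sum_eq_zero fun j _ => if_neg (by omega)

section

variable {n : ℕ}

@[simp]
lemma partialSum2n_zero_right (f : Fin (2 * n) → ℚ) : partialSum2n n f 0 = 0 := by
  simp [partialSum2n]

lemma partialSum2n_succ (f : Fin (2 * n) → ℚ) (k : Fin (2 * n)) :
    partialSum2n n f (k + 1) = partialSum2n n f k + f k := by
  have : Finset.univ.filter (fun i : Fin (2 * n) => i.val < k + 1)
      = insert k (Finset.univ.filter (fun i : Fin (2 * n) => i.val < k)) := by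
    ext i; simp [Fin.ext_iff]; omega
  rw [partialSum2n, this, Finset.sum_insert (by simp), add_comm]
  rfl

lemma partialSum2n_two_mul (f : Fin (2 * n) → ℚ) : partialSum2n n f (2 * n) = ∑ i, f i := by
  simp [partialSum2n]

@[simp]
lemma partialSum2n_zero (m : ℕ) : partialSum2n n 0 m = 0 := by
  simp [partialSum2n]

@[simp]
lemma partialSum2n_add (f g : Fin (2 * n) → ℚ) (m : ℕ) :
    partialSum2n n (f + g) m = partialSum2n n f m + partialSum2n n g m :=
  Finset.sum_add_distrib

@[simp]
lemma partialSum2n_sub (f g : Fin (2 * n) → ℚ) (m : ℕ) :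
    partialSum2n n (f - g) m = partialSum2n n f m - partialSum2n n g m :=
  Finset.sum_sub_distrib ..

@[simp]
lemma partialSum2n_smul (c : ℚ) (f : Fin (2 * n) → ℚ) (m : ℕ) :
    partialSum2n n (c • f) m = c * partialSum2n n f m :=
  (Finset.mul_sum ..).symm

@[simp]
lemma partialSum2n_sum {ι : Type*} (s : Finset ι) (f : ι → Fin (2 * n) → ℚ) (m : ℕ) :
    partialSum2n n (∑ x ∈ s, f x) m = ∑ x ∈ s, partialSum2n n (f x) m := by
  simp only [partialSum2n, Finset.sum_apply]
  exact Finset.sum_comm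

lemma eq_of_partialSum2n_eq {f g : Fin (2 * n) → ℚ}
    (h : ∀ m ≤ 2 * n, partialSum2n n f m = partialSum2n n g m) : f = g := by
  funext k
  have := h (k + 1) k.isLt
  rw [partialSum2n_succ, partialSum2n_succ, h k k.isLt.le] at this
  linarith

lemma partialSum2n_two_mul_sub {ν : Fin (2 * n) → ℚ} (hν : ∀ i, ν i + ν i.rev = 0) {m : ℕ}
    (hm : m ≤ 2 * n) : partialSum2n n ν (2 * n - m) = partialSum2n n ν m := by
  induction m with
  | zero =>
    rw [Nat.sub_zero, partialSum2n_two_mul, partialSum2n_zero_right]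
    have := Fin.sum_add_rev ν
    simp only [hν, Finset.sum_const_zero] at this
    linarith
  | succ m ih =>
    have h1 := partialSum2n_succ ν ⟨m, by omega⟩
    have h2 := partialSum2n_succ ν (Fin.rev ⟨m, by omega⟩)
    have h3 := hν ⟨m, by omega⟩
    simp only [Fin.val_rev] at h1 h2
    rw [show 2 * n - (m + 1) + 1 = 2 * n - m by omega, ih (by omega)] at h2
    linarith

def glDominanceCone (n : ℕ) : PointedCone ℚ (Fin (2 * n) → ℚ) where
  carrier := {ν | (∀ m ≤ 2 * n, 0 ≤ partialSum2n n ν m) ∧ partialSum2n n ν (2 * n) = 0}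
  add_mem' hf hg :=
    ⟨fun m hm => by simpa using add_nonneg (hf.1 m hm) (hg.1 m hm), by simp [hf.2, hg.2]⟩
  zero_mem' := ⟨fun m _ => by simp, by simp⟩
  smul_mem' c f hf := by
    have hc : c • f = (c : ℚ) • f := rfl
    refine ⟨fun m hm => ?_, ?_⟩ <;> simp only [hc, partialSum2n_smul]
    · exact mul_nonneg c.2 (hf.1 m hm)
    · rw [hf.2, mul_zero]

lemma mem_glDominanceCone {ν : Fin (2 * n) → ℚ} :
    ν ∈ glDominanceCone n ↔
      (∀ m ≤ 2 * n, 0 ≤ partialSum2n n ν m) ∧ partialSum2n n ν (2 * n) = 0 :=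
  Iff.rfl

lemma partialSum2n_ind_sub_ind {p q : ℕ} (hq : q < 2 * n) (hpq : p ≤ q) (m : ℕ) :
    partialSum2n n (ind n p - ind n q) m = if p < m ∧ m ≤ q then 1 else 0 := by
  have hind : ∀ {i}, i < 2 * n → partialSum2n n (ind n i) m = if i < m then 1 else 0 := by
    intro i hi
    have : ∀ k : Fin (2 * n), k.val = i ↔ k = ⟨i, hi⟩ := fun k => by simp [Fin.ext_iff]
    simp [partialSum2n, ind, this]
  rw [partialSum2n_sub, hind (hpq.trans_lt hq), hind hq]
  split_ifs <;> norm_num <;> omega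

lemma ind_sub_ind_mem {p q : ℕ} (hq : q < 2 * n) (hpq : p ≤ q) :
    ind n p - ind n q ∈ glDominanceCone n := by
  refine ⟨fun m _ => ?_, ?_⟩ <;> rw [partialSum2n_ind_sub_ind hq hpq]
  · positivity
  · exact if_neg (by omega)

lemma corootA_eq (i j : ℕ) :
    corootA n i j = (ind n i - ind n j) + (ind n (2 * n - 1 - j) - ind n (2 * n - 1 - i)) := by
  funext k; simp only [corootA, Pi.add_apply, Pi.sub_apply]; ring

lemma corootB_eq (i j : ℕ) :
    corootB n i j = (ind n i - ind n (2 * n - 1 - i)) + (ind n j - ind n (2 * n - 1 - j)) := by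
  funext k; simp only [corootB, Pi.add_apply, Pi.sub_apply]; ring

lemma corootC_eq (i : ℕ) : corootC n i = ind n i - ind n (2 * n - 1 - i) := rfl

lemma corootA_mem {i j : ℕ} (hij : i ≤ j) (hj : j < n) : corootA n i j ∈ glDominanceCone n := by
  rw [corootA_eq]
  exact add_mem (ind_sub_ind_mem (by omega) hij) (ind_sub_ind_mem (by omega) (by omega))

lemma corootB_mem {i j : ℕ} (hi : i < n) (hj : j < n) : corootB n i j ∈ glDominanceCone n := by
  rw [corootB_eq]
  exact add_mem (ind_sub_ind_mem (by omega) (by omega)) (ind_sub_ind_mem (by omega) (by omega))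

lemma corootC_mem {i : ℕ} (hi : i < n) : corootC n i ∈ glDominanceCone n :=
  ind_sub_ind_mem (by omega) (by omega)

def gspCorootComb (n : ℕ) (a b : Fin n → Fin n → ℚ) (d : Fin n → ℚ) : Fin (2 * n) → ℚ :=
  (∑ i, ∑ j, if i < j then a i j • corootA n i j else 0) +
    (∑ i, ∑ j, if i < j then b i j • corootB n i j else 0) + ∑ i, d i • corootC n i

lemma gspCorootComb_apply (a b : Fin n → Fin n → ℚ) (d : Fin n → ℚ) (k : Fin (2 * n)) :
    gspCorootComb n a b d k =
      (∑ i : Fin n, ∑ j : Fin n, if i < j then a i j * corootA n i.val j.val k else 0) +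
      (∑ i : Fin n, ∑ j : Fin n, if i < j then b i j * corootB n i.val j.val k else 0) +
      (∑ i : Fin n, d i * corootC n i.val k) := by
  simp [gspCorootComb, Finset.sum_apply, ite_apply]

lemma gspCorootComb_mem {a b : Fin n → Fin n → ℚ} {d : Fin n → ℚ} (ha : ∀ i j, 0 ≤ a i j)
    (hb : ∀ i j, 0 ≤ b i j) (hd : ∀ i, 0 ≤ d i) : gspCorootComb n a b d ∈ glDominanceCone n := by
  refine add_mem (add_mem ?_ ?_) (sum_mem fun i _ => (glDominanceCone n).smul_mem (hd i)
    (corootC_mem i.isLt)) <;>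
  refine sum_mem fun i _ => sum_mem fun j _ => ?_ <;> split_ifs with hij
  · exact (glDominanceCone n).smul_mem (ha i j) (corootA_mem hij.le j.isLt)
  · exact zero_mem _
  · exact (glDominanceCone n).smul_mem (hb i j) (corootB_mem i.isLt j.isLt)
  · exact zero_mem _

lemma partialSum2n_corootA_succ {i : ℕ} (hi : i + 1 < n) (m : ℕ) :
    partialSum2n n (corootA n i (i + 1)) m =
      (if m = i + 1 then 1 else 0) + (if m = 2 * n - 1 - i then 1 else 0) := by
  rw [corootA_eq, partialSum2n_add, partialSum2n_ind_sub_ind (by omega) (by omega),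
    partialSum2n_ind_sub_ind (by omega) (by omega)]
  congr 1 <;> congr 1 <;> simp only [eq_iff_iff] <;> omega

lemma partialSum2n_corootC_pred (hn : 0 < n) (m : ℕ) :
    partialSum2n n (corootC n (n - 1)) m = if m = n then 1 else 0 := by
  rw [corootC_eq, partialSum2n_ind_sub_ind (by omega) (by omega)]
  congr 1; simp only [eq_iff_iff]; omega

lemma partialSum2n_gspCorootComb (a b : Fin n → Fin n → ℚ) (d : Fin n → ℚ) (m : ℕ) :
    partialSum2n n (gspCorootComb n a b d) m =
      (∑ i, ∑ j, if i < j then a i j * partialSum2n n (corootA n i j) m else 0) +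
      (∑ i, ∑ j, if i < j then b i j * partialSum2n n (corootB n i j) m else 0) +
      ∑ i, d i * partialSum2n n (corootC n i) m := by
  simp only [gspCorootComb, partialSum2n_add, partialSum2n_sum, apply_ite (partialSum2n n · m),
    partialSum2n_smul, partialSum2n_zero]

lemma sum_succ_coeff_mul_partialSum2n_corootA (S : ℕ → ℚ) (m : ℕ) (i : Fin n) :
    (∑ j : Fin n, if i < j then
      (if (j : ℕ) = i + 1 then S j else 0) * partialSum2n n (corootA n i j) m else 0) =
      (if (i : ℕ) = m - 1 then (if 0 < m ∧ m < n then S (i + 1) else 0) else 0) +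
      (if (i : ℕ) = 2 * n - 1 - m then (if n < m ∧ m < 2 * n then S (i + 1) else 0) else 0) := by
  have hj : ∀ j : Fin n, (if i < j then (if (j : ℕ) = i + 1 then S j else 0) *
      partialSum2n n (corootA n i j) m else 0) =
      if (j : ℕ) = i + 1 then S (i + 1) * partialSum2n n (corootA n i (i + 1)) m else 0 := by
    intro j
    by_cases h : (j : ℕ) = i + 1
    · simp [h, show i < j from Fin.lt_def.2 (by omega)]
    · simp [h]
  rw [Finset.sum_congr rfl fun j _ => hj j, Fin.sum_ite_val_eq]
  by_cases hi : (i : ℕ) + 1 < n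
  · rw [dif_pos hi, partialSum2n_corootA_succ hi]
    split_ifs <;> first | omega | ring
  · rw [dif_neg hi]
    split_ifs <;> first | omega | ring

lemma gspCorootComb_simple {ν : Fin (2 * n) → ℚ} (hν : ∀ i, ν i + ν i.rev = 0) :
    gspCorootComb n (fun i j => if (j : ℕ) = i + 1 then partialSum2n n ν j else 0) 0
      (fun i => if (i : ℕ) = n - 1 then partialSum2n n ν n else 0) = ν := by
  rcases Nat.eq_zero_or_pos n with rfl | hn
  · funext k; exact absurd k.isLt (by simp)
  set S := partialSum2n n ν
  have hS : ∀ m ≤ 2 * n, S (2 * n - m) = S m := fun m hm => partialSum2n_two_mul_sub hν hm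
  have hS0 : S 0 = 0 := partialSum2n_zero_right ν
  have hS2n : S (2 * n) = 0 := by rw [← hS0, ← hS 0 (Nat.zero_le _), Nat.sub_zero]
  refine eq_of_partialSum2n_eq fun m hm => ?_
  show _ = S m
  simp only [partialSum2n_gspCorootComb, sum_succ_coeff_mul_partialSum2n_corootA,
    Pi.zero_apply, zero_mul, ite_self, Finset.sum_const_zero, add_zero, Finset.sum_add_distrib]
  simp only [Fin.sum_ite_val_eq, ite_zero_mul]
  rw [dif_pos (show n - 1 < n by omega), partialSum2n_corootC_pred hn]
  rcases (by omega : m = 0 ∨ (0 < m ∧ m < n) ∨ m = n ∨ (n < m ∧ m < 2 * n) ∨ m = 2 * n) with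
    rfl | hm' | rfl | hm' | rfl
  · simp [hS0, hn.ne]
  · rw [Nat.sub_add_cancel hm'.1]
    simp [hm', show m - 1 < n by omega, show ¬ n < m by omega, show m ≠ n by omega]
  · simp [hn]
  · rw [show 2 * n - 1 - m + 1 = 2 * n - m by omega, hS m hm]
    simp [hm', show ¬ m < n by omega, show m ≠ n by omega, show 2 * n - 1 - m < n by omega]
  · simp [hS2n, show ¬ 2 * n < n by omega, show 2 * n ≠ n by omega]

lemma sub_mem_glDominanceCone_iff {μ μ' : Fin (2 * n) → ℚ} :
    μ' - μ ∈ glDominanceCone n ↔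
      (∀ k ≤ 2 * n, partialSum2n n μ k ≤ partialSum2n n μ' k) ∧
        partialSum2n n μ (2 * n) = partialSum2n n μ' (2 * n) := by
  simp only [mem_glDominanceCone, partialSum2n_sub, sub_nonneg, sub_eq_zero, eq_comm]

end

theorem stmt_7_general (n : ℕ) (μ μ' : Fin (2 * n) → ℚ)
    (c c' : ℚ) (hsym : ∀ i, μ i + μ i.rev = c) (hsym' : ∀ i, μ' i + μ' i.rev = c') :
    ((∀ k : ℕ, k ≤ 2 * n → partialSum2n n μ k ≤ partialSum2n n μ' k) ∧
      partialSum2n n μ (2 * n) = partialSum2n n μ' (2 * n))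
    ↔ (∃ (a b : Fin n → Fin n → ℚ) (d : Fin n → ℚ),
        (∀ i j, 0 ≤ a i j) ∧ (∀ i j, 0 ≤ b i j) ∧ (∀ i, 0 ≤ d i) ∧
        ∀ k : Fin (2 * n), μ' k - μ k =
          (∑ i : Fin n, ∑ j : Fin n, if i < j then a i j * corootA n i.val j.val k else 0) +
          (∑ i : Fin n, ∑ j : Fin n, if i < j then b i j * corootB n i.val j.val k else 0) +
          (∑ i : Fin n, d i * corootC n i.val k)) := by
  simp only [← gspCorootComb_apply, ← sub_mem_glDominanceCone_iff]
  constructor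
  · intro hν
    have hanti : ∀ i, (μ' - μ) i + (μ' - μ) i.rev = 0 :=
      Fin.add_rev_eq_zero_of_sum_eq_zero (e := c' - c)
        (fun i => by simp only [Pi.sub_apply]; linarith [hsym i, hsym' i])
        (by rw [← partialSum2n_two_mul]; exact hν.2)
    refine ⟨fun i j => if (j : ℕ) = i + 1 then partialSum2n n (μ' - μ) j else 0, 0,
      fun i => if (i : ℕ) = n - 1 then partialSum2n n (μ' - μ) n else 0,
      fun i j => ?_, fun _ _ => le_rfl, fun i => ?_, fun k => ?_⟩
    · dsimp only
      split_ifs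
      exacts [hν.1 _ (by omega), le_rfl]
    · dsimp only
      split_ifs
      exacts [hν.1 _ (by omega), le_rfl]
    · rw [gspCorootComb_simple hanti, Pi.sub_apply]
  · rintro ⟨a, b, d, ha, hb, hd, h⟩
    rw [show μ' - μ = gspCorootComb n a b d from funext h]
    exact gspCorootComb_mem ha hb hd

/-- For symplectically symmetric weakly decreasing tuples, the
dominance order of `GL_{2n}` (partial sums bounded, total sums equal) agrees with
the dominance order of `GSp_{2n}` (difference a nonnegative rational combination of
the positive coroots of `GSp_{2n}`). -/
theorem stmt_7 (n : ℕ) (μ μ' : Fin (2 * n) → ℚ) (hμ : Antitone μ) (hμ' : Antitone μ')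
    (c c' : ℚ) (hsym : ∀ i, μ i + μ i.rev = c) (hsym' : ∀ i, μ' i + μ' i.rev = c') :
    ((∀ k : ℕ, k ≤ 2 * n → partialSum2n n μ k ≤ partialSum2n n μ' k) ∧
      partialSum2n n μ (2 * n) = partialSum2n n μ' (2 * n))
    ↔ (∃ (a b : Fin n → Fin n → ℚ) (d : Fin n → ℚ),
        (∀ i j, 0 ≤ a i j) ∧ (∀ i j, 0 ≤ b i j) ∧ (∀ i, 0 ≤ d i) ∧
        ∀ k : Fin (2 * n), μ' k - μ k =
          (∑ i : Fin n, ∑ j : Fin n, if i < j then a i j * corootA n i.val j.val k else 0) +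
          (∑ i : Fin n, ∑ j : Fin n, if i < j then b i j * corootB n i.val j.val k else 0) +
          (∑ i : Fin n, d i * corootC n i.val k)) :=
  stmt_7_general n μ μ' c c' hsym hsym'
end

section
/- Let ν, ν' be weakly decreasing rational 2n-tuples with symplectic symmetry (ν_i + ν_{2n+1−i} = c, ν'_i + ν'_{2n+1−i} = c − 1), satisfying ν' ⪯ ν ⪯ ν' + (1,…,1), and suppose every breakpoint of ν at x = m (meaning ν_m > ν_{m+1}) is also a breakpoint of ν' (ν'_m > ν'_{m+1}). Let 0 = n₀ < n₁ < ⋯ < n_l be the breakpoints of ν in [0, n] and set d_i = Σ_{j=n_{i−1}+1}^{n_i}(ν_j − ν'_j) ∈ ℚ. If additionally ν and ν' both have integer breakpoints in the sense that Σ_{j≤m} ν_j ∈ ℤ and Σ_{j≤m} ν'_j ∈ ℤ at every breakpoint m, then each d_i is an integer with 0 ≤ d_i ≤ n_i − n_{i−1}. -/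
/-- Sum of `ν_j − ν'_j` over (0-indexed) indices in `[a, b)`. -/
def blockDiff (n : ℕ) (ν ν' : Fin (2 * n) → ℚ) (a b : ℕ) : ℚ :=
  ∑ j ∈ Finset.univ.filter (fun j : Fin (2 * n) => a ≤ j.val ∧ j.val < b), (ν j - ν' j)

lemma sum_split (n a b : ℕ) (hab : a ≤ b) (f : Fin (2 * n) → ℚ) :
    (∑ j ∈ Finset.univ.filter (fun j : Fin (2 * n) => j.val < b), f j) =
    (∑ j ∈ Finset.univ.filter (fun j : Fin (2 * n) => j.val < a), f j) +
    ∑ j ∈ Finset.univ.filter (fun j : Fin (2 * n) => a ≤ j.val ∧ j.val < b), f j := by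
  rw [← Finset.sum_filter_add_sum_filter_not
    (Finset.univ.filter (fun j : Fin (2 * n) => j.val < b)) (fun j => j.val < a) f,
    Finset.filter_filter, Finset.filter_filter]
  congr 1
  · apply Finset.sum_congr _ (fun _ _ => rfl)
    apply Finset.filter_congr
    intro j _
    omega
  · apply Finset.sum_congr _ (fun _ _ => rfl)
    apply Finset.filter_congr
    intro j _
    omega

lemma blockDiff_eq (n : ℕ) (ν ν' : Fin (2 * n) → ℚ) (a b : ℕ) (hab : a ≤ b) :
    blockDiff n ν ν' a b =
      (partialSum2n n ν b - partialSum2n n ν' b) -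
      (partialSum2n n ν a - partialSum2n n ν' a) := by
  unfold blockDiff partialSum2n
  rw [← Finset.sum_sub_distrib, ← Finset.sum_sub_distrib,
    sum_split n a b hab (fun j => ν j - ν' j)]
  ring

/-- With `ν, ν'` symplectically symmetric (constants `c`, `c−1`),
`ν' ⪯ ν ⪯ ν' + 𝟙`, every breakpoint of `ν` a breakpoint of `ν'`, the breakpoints
`0 = n₀ < n₁ < ⋯ < n_l ≤ n` of `ν` in `[0,n]`, and integer partial sums at all
breakpoints of both `ν` and `ν'`, each drop `d_i = Σ_{n_{i−1} < j ≤ n_i}(ν_j − ν'_j)`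
is an integer with `0 ≤ d_i ≤ n_i − n_{i−1}`. -/
theorem stmt_19 (n l : ℕ) (ν ν' : Fin (2 * n) → ℚ) (hν : Antitone ν) (hν' : Antitone ν')
    (c : ℚ) (hsym : ∀ i, ν i + ν i.rev = c) (hsym' : ∀ i, ν' i + ν' i.rev = c - 1)
    (hdom : ∀ i, ν' i ≤ ν i ∧ ν i ≤ ν' i + 1)
    (hbp : ∀ m : Fin (2 * n), (h : m.val + 1 < 2 * n) →
      ν ⟨m.val + 1, h⟩ < ν m → ν' ⟨m.val + 1, h⟩ < ν' m)
    (nseq : Fin (l + 1) → ℕ) (h0 : nseq 0 = 0) (hmono : StrictMono nseq)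
    (hlen : nseq (Fin.last l) ≤ n) (hn : 0 < n)
    (hbpseq : ∀ i : Fin l, ∃ h : nseq i.succ < 2 * n,
      ν ⟨nseq i.succ, h⟩ < ν ⟨nseq i.succ - 1, by omega⟩)
    (hintν : ∀ m : Fin (2 * n), (h : m.val + 1 < 2 * n) →
      ν ⟨m.val + 1, h⟩ < ν m → ∃ z : ℤ, partialSum2n n ν (m.val + 1) = z)
    (hintν' : ∀ m : Fin (2 * n), (h : m.val + 1 < 2 * n) →
      ν' ⟨m.val + 1, h⟩ < ν' m → ∃ z : ℤ, partialSum2n n ν' (m.val + 1) = z) :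
    ∀ i : Fin l, ∃ z : ℤ,
      blockDiff n ν ν' (nseq i.castSucc) (nseq i.succ) = z ∧
      0 ≤ z ∧ (z : ℚ) ≤ (nseq i.succ : ℚ) - (nseq i.castSucc : ℚ) := by
  -- integrality of S(nseq k) := partialSum ν - partialSum ν' at each breakpoint index
  have hS : ∀ k : Fin (l + 1), ∃ z : ℤ,
      partialSum2n n ν (nseq k) - partialSum2n n ν' (nseq k) = z := by
    intro k
    rcases Fin.eq_zero_or_eq_succ k with rfl | ⟨j, rfl⟩
    · refine ⟨0, ?_⟩
      rw [h0]
      unfold partialSum2n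
      simp
    · obtain ⟨hlt, hdrop⟩ := hbpseq j
      have hpos : 0 < nseq j.succ := by
        have := hmono (show (0 : Fin (l+1)) < j.succ from Fin.succ_pos j)
        omega
      set m : Fin (2 * n) := ⟨nseq j.succ - 1, by omega⟩ with hm
      have hm1 : m.val + 1 = nseq j.succ := by simp [hm]; omega
      have hm1lt : m.val + 1 < 2 * n := by omega
      have hdropν : ν ⟨m.val + 1, hm1lt⟩ < ν m := by
        convert hdrop using 3 <;> omega
      obtain ⟨z1, hz1⟩ := hintν m hm1lt hdropν
      obtain ⟨z2, hz2⟩ := hintν' m hm1lt (hbp m hm1lt hdropν)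
      refine ⟨z1 - z2, ?_⟩
      rw [← hm1, hz1, hz2]
      push_cast
      ring
  intro i
  have hab : nseq i.castSucc ≤ nseq i.succ :=
    le_of_lt (hmono (Fin.castSucc_lt_succ (i := i)))
  obtain ⟨za, hza⟩ := hS i.castSucc
  obtain ⟨zb, hzb⟩ := hS i.succ
  have hval : blockDiff n ν ν' (nseq i.castSucc) (nseq i.succ) = ((zb - za : ℤ) : ℚ) := by
    rw [blockDiff_eq n ν ν' _ _ hab, hza, hzb]
    push_cast; ring
  have hnonneg : 0 ≤ blockDiff n ν ν' (nseq i.castSucc) (nseq i.succ) := by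
    apply Finset.sum_nonneg
    intro j _
    have := (hdom j).1
    linarith
  have hcard : (Finset.univ.filter
      (fun j : Fin (2 * n) => nseq i.castSucc ≤ j.val ∧ j.val < nseq i.succ)).card
      ≤ nseq i.succ - nseq i.castSucc := by
    have := Finset.card_le_card_of_injOn (fun j : Fin (2 * n) => j.val)
      (s := Finset.univ.filter
        (fun j : Fin (2 * n) => nseq i.castSucc ≤ j.val ∧ j.val < nseq i.succ))
      (t := Finset.Ico (nseq i.castSucc) (nseq i.succ))
      (by intro j hj; simp at hj ⊢; omega)
      (by intro x _ y _ h; exact Fin.ext h)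
    simpa using this
  have hupper : blockDiff n ν ν' (nseq i.castSucc) (nseq i.succ) ≤
      ((nseq i.succ - nseq i.castSucc : ℕ) : ℚ) := by
    calc blockDiff n ν ν' (nseq i.castSucc) (nseq i.succ)
        ≤ (Finset.univ.filter
          (fun j : Fin (2 * n) => nseq i.castSucc ≤ j.val ∧ j.val < nseq i.succ)).card • (1:ℚ) := by
          apply Finset.sum_le_card_nsmul
          intro j _
          have := (hdom j).2
          linarith
      _ = ((Finset.univ.filter
          (fun j : Fin (2 * n) => nseq i.castSucc ≤ j.val ∧ j.val < nseq i.succ)).card : ℚ) := by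
          simp
      _ ≤ ((nseq i.succ - nseq i.castSucc : ℕ) : ℚ) := by exact_mod_cast hcard
  refine ⟨zb - za, hval, ?_, ?_⟩
  · have : (0 : ℚ) ≤ ((zb - za : ℤ) : ℚ) := hval ▸ hnonneg
    exact_mod_cast this
  · have h1 : ((zb - za : ℤ) : ℚ) ≤ ((nseq i.succ - nseq i.castSucc : ℕ) : ℚ) :=
      hval ▸ hupper
    have h2 : ((nseq i.succ - nseq i.castSucc : ℕ) : ℚ) =
        (nseq i.succ : ℚ) - (nseq i.castSucc : ℚ) := by
      rw [Nat.cast_sub hab]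
    linarith
end
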